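/- arXiv:0804.2585 — 7 statements merged into one kernel-verified Lean document; each statement's English description precedes it below -/
import Mathlib

section
/- In the ring of formal power series in u over the polynomial ring ℚ[x_1, x_2, …], one has exp(Σ_{n≥1} ((−1)^{n+1}/n) x_n u^n) = Σ_{n≥0} P_n(x_1,…,x_n) u^n, where P_n are the Kailath–Segall polynomials. -/
/-- The Kailath–Segall polynomials, defined by `P₀ = 1` and the recurrence
`Pₙ = (1/n)(Pₙ₋₁ x₁ − Pₙ₋₂ x₂ + ⋯ + (−1)^{n+1} P₀ xₙ)`, evaluated at a
sequence `x` (indexed from 1) in a commutative `ℚ`-algebra. -/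
noncomputable def KS {A : Type*} [CommRing A] [Algebra ℚ A] (x : ℕ → A) : ℕ → A
  | 0 => 1
  | n + 1 =>
      (((n : ℚ) + 1)⁻¹) •
        ∑ j ∈ Finset.range (n + 1), ((-1 : A) ^ j * KS x (n - j) * x (j + 1))
  termination_by n => n
  decreasing_by omega

/-- The exponential of a formal power series with zero constant term:
`exp f = Σ_k f^k / k!`; for each `n`, only the terms with `k ≤ n` contribute
to the `n`-th coefficient. -/
noncomputable def psExp {A : Type*} [CommRing A] [Algebra ℚ A]
    (f : PowerSeries A) : PowerSeries A :=
  PowerSeries.mk fun n =>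
    ∑ k ∈ Finset.range (n + 1), ((k.factorial : ℚ))⁻¹ • PowerSeries.coeff n (f ^ k)

/-! Writing `f` for the series inside the exponential, `E = psExp f` satisfies `E' = f' E`, because
`f` has no constant term and so the truncated exponential sum can be differentiated term by term.
The defining recurrence of the Kailath–Segall polynomials says precisely that `K = Σ Pₙ uⁿ` solves
the same linear differential equation, with `f' = Σ (-1)ⁿ xₙ₊₁ uⁿ`. Both start with `1`, and over
a `ℚ`-algebra such an equation determines a power series from its constant term, so `E = K`. -/

section KS

variable {A : Type*} [CommRing A] [Algebra ℚ A] (x : ℕ → A)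

@[simp] theorem KS_zero : KS x 0 = 1 := by
  rw [KS]

theorem KS_succ_mul (n : ℕ) :
    KS x (n + 1) * (n + 1) = ∑ j ∈ Finset.range (n + 1), (-1) ^ j * KS x (n - j) * x (j + 1) := by
  have hcast : (n + 1 : A) = algebraMap ℚ A (n + 1) := by simp
  rw [KS, smul_mul_assoc, mul_comm, hcast, ← Algebra.smul_def, inv_smul_smul₀ (by positivity)]

end KS

namespace PowerSeries

open Finset

theorem eq_of_derivative_eq_mul_self {R : Type*} [CommRing R] [IsAddTorsionFree R]
    {p g h : R⟦X⟧} (hg : d⁄dX R g = p * g) (hh : d⁄dX R h = p * h)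
    (h₀ : constantCoeff g = constantCoeff h) : g = h := by
  ext n
  induction n using Nat.strong_induction_on with
  | _ n ih =>
    rcases n with _ | n
    · simpa using h₀
    · have hcoeff : coeff (n + 1) g * (n + 1) = coeff (n + 1) h * (n + 1) := by
        rw [← coeff_derivative, ← coeff_derivative, hg, hh, coeff_mul, coeff_mul]
        refine sum_congr rfl fun ij hij => ?_
        rw [ih ij.2 (Nat.antidiagonal.snd_lt hij)]
      simp only [← Nat.cast_succ, mul_comm _ ((n + 1 : ℕ) : R), ← nsmul_eq_mul] at hcoeff
      exact nsmul_right_injective (Nat.succ_ne_zero n) hcoeff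

theorem coeff_pow_eq_zero_of_lt {R : Type*} [CommSemiring R] {f : R⟦X⟧}
    (hf : constantCoeff f = 0) {n m : ℕ} (h : n < m) : coeff n (f ^ m) = 0 := by
  obtain ⟨g, rfl⟩ := X_dvd_iff.mpr hf
  rw [mul_pow, coeff_X_pow_mul', if_neg (by omega)]

variable {A : Type*} [CommRing A] [Algebra ℚ A] {f : A⟦X⟧}

theorem coeff_psExp (f : A⟦X⟧) (n : ℕ) :
    coeff n (psExp f) = ∑ k ∈ range (n + 1), (k.factorial : ℚ)⁻¹ • coeff n (f ^ k) :=
  coeff_mk _ _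

theorem constantCoeff_psExp (f : A⟦X⟧) : constantCoeff (psExp f) = 1 := by
  rw [← coeff_zero_eq_constantCoeff_apply, coeff_psExp]
  simp

theorem coeff_psExp_eq_sum_of_le (hf : constantCoeff f = 0) {n N : ℕ} (h : n ≤ N) :
    coeff n (psExp f) = ∑ k ∈ range (N + 1), (k.factorial : ℚ)⁻¹ • coeff n (f ^ k) := by
  rw [coeff_psExp]
  refine sum_subset (range_subset_range.mpr (by omega)) fun k hkN hkn => ?_
  rw [mem_range] at hkN hkn
  rw [coeff_pow_eq_zero_of_lt hf (by omega), smul_zero]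

theorem coeff_mul_psExp (hf : constantCoeff f = 0) (g : A⟦X⟧) (n : ℕ) :
    coeff n (g * psExp f) =
      ∑ k ∈ range (n + 1), (k.factorial : ℚ)⁻¹ • coeff n (g * f ^ k) := by
  simp only [coeff_mul, smul_sum]
  rw [sum_comm]
  refine sum_congr rfl fun ij hij => ?_
  rw [coeff_psExp_eq_sum_of_le hf (HasAntidiagonal.antidiagonal.snd_le hij), mul_sum]
  simp only [mul_smul_comm]

theorem derivative_psExp (hf : constantCoeff f = 0) :
    d⁄dX A (psExp f) = d⁄dX A f * psExp f := by
  ext n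
  have hterm : ∀ m : ℕ, ((m + 1).factorial : ℚ)⁻¹ • coeff (n + 1) (f ^ (m + 1)) * (n + 1) =
      (m.factorial : ℚ)⁻¹ • coeff n (d⁄dX A f * f ^ m) := by
    intro m
    rw [smul_mul_assoc, ← coeff_derivative, derivative_pow, Nat.add_sub_cancel, mul_assoc,
      mul_comm (d⁄dX A f), ← nsmul_eq_mul, ← Nat.cast_smul_eq_nsmul ℚ,
      LinearMap.map_smul_of_tower, smul_smul, Nat.factorial_succ, Nat.cast_mul]
    congr 1
    field_simp
  rw [coeff_derivative, coeff_psExp, sum_mul, sum_range_succ', coeff_mul_psExp hf]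
  simp [hterm]

theorem derivative_mk_KS (x : ℕ → A) :
    d⁄dX A (mk (KS x)) = (mk fun n => (-1) ^ n * x (n + 1)) * mk (KS x) := by
  ext n
  rw [coeff_derivative, coeff_mk, KS_succ_mul, coeff_mul,
    Nat.sum_antidiagonal_eq_sum_range_succ_mk]
  refine sum_congr rfl fun j _ => ?_
  simp only [coeff_mk]
  ring

theorem psExp_eq_mk_KS (x : ℕ → A) :
    psExp (mk fun n => if n = 0 then 0 else ((-1 : ℚ) ^ (n + 1) / n) • x n) = mk (KS x) := by
  set f : A⟦X⟧ := mk fun n => if n = 0 then 0 else ((-1 : ℚ) ^ (n + 1) / n) • x n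
  have hf : constantCoeff f = 0 := by
    simp [f, ← coeff_zero_eq_constantCoeff_apply]
  have hf' : d⁄dX A f = mk fun n => (-1) ^ n * x (n + 1) := by
    ext n
    rw [coeff_derivative, coeff_mk, coeff_mk, if_neg n.succ_ne_zero]
    have hcast : (n + 1 : A) = algebraMap ℚ A (n + 1) := by simp
    have hscalar : (-1 : ℚ) ^ (n + 1 + 1) / ↑(n + 1) * (n + 1) = (-1) ^ n := by
      push_cast
      field_simp
      ring
    rw [hcast, Algebra.smul_def, mul_right_comm, ← map_mul, hscalar, map_pow, map_neg, map_one]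
  have : IsAddTorsionFree A := .of_module_rat A
  refine eq_of_derivative_eq_mul_self (derivative_psExp hf) ?_ ?_
  · rw [derivative_mk_KS, hf']
  · rw [constantCoeff_psExp, ← coeff_zero_eq_constantCoeff_apply, coeff_mk, KS_zero]

end PowerSeries

/-- In `ℚ[x₁, x₂, …][[u]]`,
`exp(Σ_{n≥1} ((−1)^{n+1}/n) xₙ uⁿ) = Σ_{n≥0} Pₙ(x₁,…,xₙ) uⁿ`. -/
theorem kailathSegall_generating_function :
    psExp (PowerSeries.mk fun n =>
        if n = 0 then (0 : MvPolynomial ℕ ℚ)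
        else ((-1 : ℚ) ^ (n + 1) / n) • MvPolynomial.X n) =
      PowerSeries.mk fun n => KS MvPolynomial.X n :=
  PowerSeries.psExp_eq_mk_KS MvPolynomial.X
end

section
/- For every n ≥ 1, the Kailath–Segall polynomial satisfies the explicit formula P_n(x_1,…,x_n) = (−1)^n Σ ∏_{j=1}^n (−x_j)^{m_j} / (j^{m_j} · m_j!), where the summation is over all tuples of nonnegative integers (m_1,…,m_n) with Σ_{j=1}^n j·m_j = n. -/
open Finset

namespace KS

variable {N : ℕ}

-- The index `j : Fin N` (and `j` in `factor x j`) stands for the paper's index `j + 1`.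
def weight (m : Fin N → ℕ) : ℕ := ∑ j, (j.1 + 1) * m j

lemma weight_add (m m' : Fin N → ℕ) : weight (m + m') = weight m + weight m' := by
  simp only [weight, Pi.add_apply, mul_add, sum_add_distrib]

lemma weight_single (i : Fin N) : weight (Pi.single i 1) = i.1 + 1 := by
  simp [weight, Pi.single_apply]

lemma mul_le_weight (m : Fin N → ℕ) (i : Fin N) : (i.1 + 1) * m i ≤ weight m :=
  single_le_sum (f := fun j : Fin N => (j.1 + 1) * m j) (fun _ _ => Nat.zero_le _) (mem_univ i)

def tuples (N s : ℕ) : Finset (Fin N → ℕ) :=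
  filter (fun m => weight m = s) (Fintype.piFinset fun _ => range (s + 1))

lemma mem_tuples {s : ℕ} {m : Fin N → ℕ} : m ∈ tuples N s ↔ weight m = s := by
  refine ⟨fun h => (mem_filter.1 h).2, fun h => mem_filter.2 ⟨?_, h⟩⟩
  refine Fintype.mem_piFinset.2 fun i => mem_range.2 ?_
  have := mul_le_weight m i
  nlinarith

lemma tuples_zero : tuples N 0 = {0} := by
  ext m
  simp only [mem_tuples, weight, mem_singleton, sum_eq_zero_iff, mem_univ, true_implies,
    mul_eq_zero, Nat.succ_ne_zero, false_or, funext_iff, Pi.zero_apply]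

variable {A : Type*} [CommRing A] [Algebra ℚ A] (x : ℕ → A)

noncomputable def factor (j k : ℕ) : A :=
  (((j : ℚ) + 1) ^ k * (k.factorial : ℚ))⁻¹ • (-x (j + 1)) ^ k

noncomputable def explicitSum (N s : ℕ) : A :=
  ∑ m ∈ tuples N s, ∏ j, factor x j.1 (m j)

lemma factor_zero (j : ℕ) : factor x j 0 = 1 := by
  simp [factor]

lemma factor_succ (j k : ℕ) :
    (((j + 1) * (k + 1) : ℕ) : ℚ) • factor x j (k + 1) = -x (j + 1) * factor x j k := by
  have hj : ((j : ℚ) + 1) ≠ 0 := by positivity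
  have hk : ((k : ℚ) + 1) ≠ 0 := by positivity
  simp only [factor, Nat.factorial_succ, smul_smul, pow_succ', mul_smul_comm]
  congr 1
  push_cast
  field_simp

lemma explicitSum_zero (N : ℕ) : explicitSum x N 0 = 1 := by
  simp [explicitSum, tuples_zero, factor_zero]

variable {x}

lemma sub_single_add_single {m : Fin N → ℕ} {i : Fin N} (h : m i ≠ 0) :
    m - Pi.single i 1 + Pi.single i 1 = m := by
  funext j
  rcases eq_or_ne j i with rfl | hj
  · simp only [Pi.add_apply, Pi.sub_apply, Pi.single_eq_same]
    omega
  · simp [Pi.single_eq_of_ne hj]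

lemma smul_prod_factor_add_single (m : Fin N → ℕ) (i : Fin N) :
    (((i.1 + 1) * (m + Pi.single i 1 : Fin N → ℕ) i : ℕ) : ℚ) •
        ∏ j, factor x j.1 ((m + Pi.single i 1 : Fin N → ℕ) j)
      = -x (i.1 + 1) * ∏ j, factor x j.1 (m j) := by
  have hcompl : ∏ j ∈ {i}ᶜ, factor x j.1 ((m + Pi.single i 1 : Fin N → ℕ) j)
      = ∏ j ∈ {i}ᶜ, factor x j.1 (m j) :=
    prod_congr rfl fun j hj => by
      rw [Pi.add_apply, Pi.single_eq_of_ne (by simpa using hj), add_zero]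
  rw [Fintype.prod_eq_mul_prod_compl i,
    Fintype.prod_eq_mul_prod_compl i (fun j => factor x j.1 (m j)), hcompl, ← smul_mul_assoc,
    Pi.add_apply, Pi.single_eq_same, factor_succ, mul_assoc]

lemma sum_weight_smul_prod (i : Fin N) (s : ℕ) :
    ∑ m ∈ tuples N (s + (i.1 + 1)), (((i.1 + 1) * m i : ℕ) : ℚ) • ∏ j, factor x j.1 (m j)
      = -x (i.1 + 1) * explicitSum x N s := by
  rw [explicitSum, mul_sum,
    ← sum_filter_of_ne (p := fun m => m i ≠ 0) fun m _ h hm => h (by simp [hm])]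
  refine sum_nbij' (fun m => m - Pi.single i 1) (fun m => m + Pi.single i 1) ?_ ?_ ?_ ?_ ?_
  · intro m hm
    rw [mem_filter, mem_tuples] at hm
    rw [mem_tuples]
    have hw := weight_add (m - Pi.single i 1) (Pi.single i 1)
    rw [sub_single_add_single hm.2, weight_single] at hw
    omega
  · intro m hm
    rw [mem_tuples] at hm
    simp [mem_tuples, weight_add, weight_single, hm]
  · intro m hm
    exact sub_single_add_single (mem_filter.1 hm).2
  · intro m _
    exact add_tsub_cancel_right m _
  · intro m hm
    obtain ⟨m, rfl⟩ : ∃ m' : Fin N → ℕ, m = m' + Pi.single i 1 :=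
      ⟨_, (sub_single_add_single (mem_filter.1 hm).2).symm⟩
    rw [add_tsub_cancel_right, smul_prod_factor_add_single]

lemma sum_weight_smul_prod_of_lt {i : Fin N} {s : ℕ} (h : s < i.1 + 1) :
    ∑ m ∈ tuples N s, (((i.1 + 1) * m i : ℕ) : ℚ) • ∏ j, factor x j.1 (m j) = 0 :=
  sum_eq_zero fun m hm => by
    have hle : (i.1 + 1) * m i ≤ s := mem_tuples.1 hm ▸ mul_le_weight m i
    have hm0 : m i = 0 := by nlinarith
    simp [hm0]

lemma cast_smul_explicitSum (s : ℕ) :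
    (s : ℚ) • explicitSum x N s
      = ∑ i : Fin N, ∑ m ∈ tuples N s, (((i.1 + 1) * m i : ℕ) : ℚ) • ∏ j, factor x j.1 (m j) := by
  rw [sum_comm, explicitSum, smul_sum]
  refine sum_congr rfl fun m hm => ?_
  rw [← sum_smul, ← Nat.cast_sum]
  congr
  exact (mem_tuples.1 hm).symm

lemma succ_smul_explicitSum_succ {s : ℕ} (hs : s + 1 ≤ N) :
    ((s : ℚ) + 1) • explicitSum x N (s + 1)
      = ∑ j ∈ range (s + 1), -x (j + 1) * explicitSum x N (s - j) := by
  let f : ℕ → A := fun j => if j ≤ s then -x (j + 1) * explicitSum x N (s - j) else 0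
  have hterm (i : Fin N) :
      ∑ m ∈ tuples N (s + 1), (((i.1 + 1) * m i : ℕ) : ℚ) • ∏ j, factor x j.1 (m j) = f i := by
    simp only [f]
    split_ifs with hi
    · rw [← sum_weight_smul_prod, show s - i.1 + (i.1 + 1) = s + 1 by omega]
    · exact sum_weight_smul_prod_of_lt (by omega)
  have hrange : (range N).filter (· ≤ s) = range (s + 1) := by
    ext j
    simp only [mem_filter, mem_range]
    omega
  calc ((s : ℚ) + 1) • explicitSum x N (s + 1)
      = ∑ i : Fin N, f i := by
        rw [← Nat.cast_succ, cast_smul_explicitSum]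
        exact sum_congr rfl fun i _ => hterm i
    _ = ∑ j ∈ range N, f j := Fin.sum_univ_eq_sum_range f N
    _ = _ := by rw [← sum_filter, hrange]

theorem eq_neg_one_pow_mul_explicitSum {s : ℕ} (hs : s ≤ N) :
    KS x s = (-1 : A) ^ s * explicitSum x N s := by
  induction s using Nat.strong_induction_on with
  | _ s ih =>
    rcases s with _ | s
    · rw [KS, explicitSum_zero, pow_zero, one_mul]
    have hterm (j : ℕ) (hj : j ∈ range (s + 1)) :
        (-1 : A) ^ j * KS x (s - j) * x (j + 1)
          = (-1 : A) ^ s * (-x (j + 1) * explicitSum x N (s - j)) * -1 := by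
      obtain ⟨k, rfl⟩ : ∃ k, s = j + k := ⟨s - j, by have := mem_range.1 hj; omega⟩
      rw [Nat.add_sub_cancel_left, ih k (by omega) (by omega)]
      ring
    have hs' : ((s : ℚ) + 1) ≠ 0 := by positivity
    rw [KS, sum_congr rfl hterm, ← sum_mul, ← mul_sum, ← succ_smul_explicitSum_succ hs,
      mul_smul_comm, smul_mul_assoc, smul_smul, inv_mul_cancel₀ hs', one_smul]
    ring

end KS

theorem kailathSegall_explicit_general (n : ℕ) :
    KS (MvPolynomial.X : ℕ → MvPolynomial ℕ ℚ) n =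
      (-1 : MvPolynomial ℕ ℚ) ^ n *
        ∑ m ∈ Finset.filter (fun m : Fin n → ℕ => ∑ j, (j.1 + 1) * m j = n)
            (Fintype.piFinset fun _ : Fin n => Finset.range (n + 1)),
          ∏ j : Fin n,
            ((((j.1 + 1 : ℚ)) ^ (m j) * ((m j).factorial : ℚ))⁻¹) •
              (-(MvPolynomial.X (j.1 + 1) : MvPolynomial ℕ ℚ)) ^ (m j) :=
  KS.eq_neg_one_pow_mul_explicitSum le_rfl

/-- Explicit formula for the Kailath–Segall polynomials:
`Pₙ(x₁,…,xₙ) = (−1)ⁿ Σ ∏_{j=1}^n (−x_j)^{m_j} / (j^{m_j} m_j!)`,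
the sum being over all nonnegative integer tuples `(m₁,…,mₙ)` with
`Σ_j j·m_j = n` (all such tuples satisfy `m_j ≤ n`, so the sum over the
box `{0,…,n}ⁿ` filtered by the constraint captures them all). -/
theorem kailathSegall_explicit (n : ℕ) (hn : 1 ≤ n) :
    KS (MvPolynomial.X : ℕ → MvPolynomial ℕ ℚ) n =
      (-1 : MvPolynomial ℕ ℚ) ^ n *
        ∑ m ∈ Finset.filter (fun m : Fin n → ℕ => ∑ j, (j.1 + 1) * m j = n)
            (Fintype.piFinset fun _ : Fin n => Finset.range (n + 1)),
          ∏ j : Fin n,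
            ((((j.1 + 1 : ℚ)) ^ (m j) * ((m j).factorial : ℚ))⁻¹) •
              (-(MvPolynomial.X (j.1 + 1) : MvPolynomial ℕ ℚ)) ^ (m j) :=
  kailathSegall_explicit_general n
end

section
/- For every n ≥ 0, the identity P_n(a x_1 + b y_1, a² x_2 + b² y_2, …, a^n x_n + b^n y_n) = Σ_{k=0}^n a^k b^{n−k} P_k(x_1,…,x_k) · P_{n−k}(y_1,…,y_{n−k}) holds in the polynomial ring ℚ[a, b, x_1,…,x_n, y_1,…,y_n]. -/
open PowerSeries

namespace PowerSeries

variable {R : Type*}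

section CommSemiring

variable [CommSemiring R]

theorem constantCoeff_rescale (a : R) (f : R⟦X⟧) :
    constantCoeff (rescale a f) = constantCoeff f := by
  rw [← coeff_zero_eq_constantCoeff_apply, coeff_rescale, pow_zero, one_mul,
    coeff_zero_eq_constantCoeff_apply]

theorem derivative_rescale (a : R) (f : R⟦X⟧) :
    d⁄dX R (rescale a f) = C a * rescale a (d⁄dX R f) := by
  ext n
  simp only [coeff_derivative, coeff_rescale, coeff_C_mul]
  ring

theorem derivative_rescale_eq_mul {f h : R⟦X⟧} (a : R) (hf : d⁄dX R f = f * h) :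
    d⁄dX R (rescale a f) = rescale a f * (C a * rescale a h) := by
  rw [derivative_rescale, hf, map_mul]
  ring

theorem derivative_mul_eq_mul_add {f g h k : R⟦X⟧}
    (hf : d⁄dX R f = f * h) (hg : d⁄dX R g = g * k) :
    d⁄dX R (f * g) = f * g * (h + k) := by
  rw [Derivation.leibniz, hf, hg, smul_eq_mul, smul_eq_mul]
  ring

end CommSemiring

theorem eq_of_derivative_eq_mul [CommRing R] [IsAddTorsionFree R] {f g h : R⟦X⟧}
    (hf : d⁄dX R f = f * h) (hg : d⁄dX R g = g * h)
    (hf₀ : constantCoeff f = 1) (hg₀ : constantCoeff g = 1) : f = g := by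
  obtain ⟨u, rfl⟩ := isUnit_iff_constantCoeff.mpr (hf₀ ▸ isUnit_one)
  have hu : (u : R⟦X⟧) * ↑u⁻¹ = 1 := u.mul_inv
  have hquot : g * ↑u⁻¹ = 1 := by
    refine derivative.ext ?_ ?_
    · rw [Derivation.leibniz, derivative_inv, derivative_one, hf, hg, smul_eq_mul, smul_eq_mul]
      linear_combination (-(g * ↑u⁻¹ * h)) * hu
    · have hu₀ := congrArg constantCoeff hu
      simp only [map_mul, hf₀, map_one, one_mul] at hu₀
      simp [hg₀, hu₀]
  calc (u : R⟦X⟧) = g * ↑u⁻¹ * u := by rw [hquot, one_mul]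
    _ = g := by rw [mul_assoc, u.inv_mul, mul_one]

end PowerSeries

namespace KS

noncomputable def logDeriv {R : Type*} [CommRing R] (x : ℕ → R) : R⟦X⟧ :=
  mk fun j => (-1) ^ j * x (j + 1)

theorem logDeriv_scaled_add {R : Type*} [CommRing R] (a b : R) (x y : ℕ → R) :
    logDeriv (fun k => a ^ k * x k + b ^ k * y k) =
      C a * rescale a (logDeriv x) + C b * rescale b (logDeriv y) := by
  ext n
  simp only [logDeriv, coeff_mk, map_add, coeff_C_mul, coeff_rescale]
  ring

variable {A : Type*} [CommRing A] [Algebra ℚ A]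

noncomputable def series (x : ℕ → A) : A⟦X⟧ := mk (KS x)

theorem succ_smul_eq_sum (x : ℕ → A) (n : ℕ) :
    ((n : ℚ) + 1) • KS x (n + 1) =
      ∑ j ∈ Finset.range (n + 1), (-1 : A) ^ j * KS x (n - j) * x (j + 1) := by
  rw [KS, smul_smul, mul_inv_cancel₀ (by positivity), one_smul]

theorem constantCoeff_series (x : ℕ → A) : constantCoeff (series x) = 1 := by
  simp [series, KS]

theorem derivative_series (x : ℕ → A) : d⁄dX A (series x) = series x * logDeriv x := by
  ext n
  rw [coeff_derivative, mul_comm (series x), coeff_mul,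
    Finset.Nat.sum_antidiagonal_eq_sum_range_succ_mk]
  simp only [series, logDeriv, coeff_mk]
  have hrec := succ_smul_eq_sum x n
  rw [Algebra.smul_def, map_add, map_natCast, map_one] at hrec
  rw [mul_comm, hrec]
  exact Finset.sum_congr rfl fun j _ => by ring

theorem series_scaled_add (a b : A) (x y : ℕ → A) :
    series (fun k => a ^ k * x k + b ^ k * y k) =
      rescale a (series x) * rescale b (series y) := by
  have : IsAddTorsionFree A := .of_module_rat A
  refine eq_of_derivative_eq_mul (derivative_series _) ?_ (constantCoeff_series _) ?_
  · rw [logDeriv_scaled_add]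
    exact derivative_mul_eq_mul_add (derivative_rescale_eq_mul a (derivative_series x))
      (derivative_rescale_eq_mul b (derivative_series y))
  · rw [map_mul, constantCoeff_rescale, constantCoeff_rescale, constantCoeff_series,
      constantCoeff_series, one_mul]

theorem scaled_add (a b : A) (x y : ℕ → A) (n : ℕ) :
    KS (fun k => a ^ k * x k + b ^ k * y k) n =
      ∑ k ∈ Finset.range (n + 1), a ^ k * b ^ (n - k) * KS x k * KS y (n - k) := by
  have h := congrArg (coeff n) (series_scaled_add a b x y)
  rw [coeff_mul, Finset.Nat.sum_antidiagonal_eq_sum_range_succ_mk] at h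
  simp only [series, coeff_mk, coeff_rescale] at h
  rw [h]
  exact Finset.sum_congr rfl fun k _ => by ring

end KS

/-- Variables: `a = X (inl 0)`, `b = X (inr 0)`, `xₖ = X (inl k)`, `yₖ = X (inr k)`. -/
theorem kailathSegall_binomial_scaled (n : ℕ) :
    KS (fun k =>
        (MvPolynomial.X (Sum.inl 0) : MvPolynomial (ℕ ⊕ ℕ) ℚ) ^ k *
            MvPolynomial.X (Sum.inl k) +
          MvPolynomial.X (Sum.inr 0) ^ k * MvPolynomial.X (Sum.inr k)) n =
      ∑ k ∈ Finset.range (n + 1),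
        MvPolynomial.X (Sum.inl 0) ^ k * MvPolynomial.X (Sum.inr 0) ^ (n - k) *
          KS (fun j => (MvPolynomial.X (Sum.inl j) : MvPolynomial (ℕ ⊕ ℕ) ℚ)) k *
          KS (fun j => (MvPolynomial.X (Sum.inr j) : MvPolynomial (ℕ ⊕ ℕ) ℚ)) (n - k) :=
  KS.scaled_add _ _ _ _ n
end

section
/- For every n ≥ 0, the identity P_n(x, x, …, x) = x(x−1)(x−2)⋯(x−n+1)/n! holds in ℚ[x], i.e., the Kailath–Segall polynomial evaluated with all variables equal to x is the n-th falling factorial divided by n!. -/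
/-! Write `bₙ = X (X - 1) ⋯ (X - n + 1) / n!` for the binomial polynomial. Pascal's rule
`bₙ₊₁(X) = bₙ₊₁(X - 1) + bₙ(X - 1)` makes the alternating sum `∑ⱼ (-1)ʲ bₙ₋ⱼ` telescope to
`bₙ(X - 1)`, and absorption `(n + 1) bₙ₊₁ = X bₙ(X - 1)` then shows that `b` satisfies the
Kailath–Segall recurrence at `x₁ = x₂ = ⋯ = X`. -/

open Polynomial Finset Nat

theorem sum_range_succ_neg_one_pow_mul_eq_of_eq_add {R : Type*} [CommRing R] {f g : ℕ → R}
    (h_zero : f 0 = g 0) (h_succ : ∀ n, f (n + 1) = g (n + 1) + g n) (n : ℕ) :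
    ∑ j ∈ range (n + 1), (-1) ^ j * f (n - j) = g n := by
  induction n with
  | zero => simpa using h_zero
  | succ n ih =>
    simp only [sum_range_succ', Nat.succ_sub_succ, Nat.sub_zero, pow_zero, one_mul, pow_succ,
      mul_neg_one, neg_mul, sum_neg_distrib, ih, h_succ]
    ring

theorem descPochhammer_eq_prod_range (R : Type*) [CommRing R] (n : ℕ) :
    descPochhammer R n = ∏ j ∈ range n, (X - (j : R[X])) := by
  induction n with
  | zero => simp
  | succ n ih => rw [descPochhammer_succ_right, ih, prod_range_succ]

noncomputable def binomialPoly (n : ℕ) : ℚ[X] :=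
  (n ! : ℚ)⁻¹ • descPochhammer ℚ n

theorem binomialPoly_zero : binomialPoly 0 = 1 := by
  simp [binomialPoly]

theorem succ_smul_binomialPoly_succ (n : ℕ) :
    ((n : ℚ) + 1) • binomialPoly (n + 1) = X * (binomialPoly n).comp (X - 1) := by
  rw [binomialPoly, descPochhammer_succ_left, binomialPoly, smul_comp, smul_smul, mul_smul_comm,
    factorial_succ, cast_mul, mul_inv, ← mul_assoc, cast_succ, mul_inv_cancel₀ (by positivity),
    one_mul]

theorem binomialPoly_succ_eq_comp_add_comp (n : ℕ) :
    binomialPoly (n + 1) =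
      (binomialPoly (n + 1)).comp (X - 1) + (binomialPoly n).comp (X - 1) := by
  have h_factorial : C ((n + 1)! : ℚ)⁻¹ * ((n : ℚ[X]) + 1) = C (n ! : ℚ)⁻¹ := by
    rw [← C_eq_natCast, ← C_1, ← C_add, ← C_mul, factorial_succ, cast_mul, cast_succ]
    congr 1
    field_simp
  rw [binomialPoly, binomialPoly, smul_comp, smul_comp, descPochhammer_succ_comp_X_sub_one]
  simp only [smul_eq_C_mul]
  linear_combination h_factorial * (descPochhammer ℚ n).comp (X - 1)

theorem KS_succ {A : Type*} [CommRing A] [Algebra ℚ A] (x : ℕ → A) (n : ℕ) :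
    KS x (n + 1) =
      ((n : ℚ) + 1)⁻¹ • ∑ j ∈ range (n + 1), (-1 : A) ^ j * KS x (n - j) * x (j + 1) := by
  rw [KS]

theorem KS_const_X (n : ℕ) : KS (fun _ => (X : ℚ[X])) n = binomialPoly n := by
  induction n using Nat.strong_induction_on with
  | _ n ih =>
    rcases n with _ | n
    · rw [KS, binomialPoly_zero]
    have h_sum : ∑ j ∈ range (n + 1), (-1 : ℚ[X]) ^ j * KS (fun _ => X) (n - j) * X =
        X * (binomialPoly n).comp (X - 1) := by
      calc _ = X * ∑ j ∈ range (n + 1), (-1) ^ j * binomialPoly (n - j) := by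
            rw [mul_sum]
            exact sum_congr rfl fun j _ => by rw [ih (n - j) (by omega)]; ring
        _ = X * (binomialPoly n).comp (X - 1) := by
            rw [sum_range_succ_neg_one_pow_mul_eq_of_eq_add
              (g := fun m => (binomialPoly m).comp (X - 1)) (by rw [binomialPoly_zero, one_comp])
              binomialPoly_succ_eq_comp_add_comp]
    rw [KS_succ, h_sum, ← succ_smul_binomialPoly_succ, inv_smul_smul₀ (by positivity)]

/-- `Pₙ(x, x, …, x) = x(x−1)⋯(x−n+1)/n!` in `ℚ[x]`. -/
theorem kailathSegall_diagonal (n : ℕ) :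
    KS (fun _ => (Polynomial.X : Polynomial ℚ)) n =
      ((n.factorial : ℚ))⁻¹ •
        ∏ j ∈ Finset.range n, ((Polynomial.X : Polynomial ℚ) - (j : Polynomial ℚ)) := by
  rw [KS_const_X, binomialPoly, descPochhammer_eq_prod_range]
end

section
/- Let ν be a Lévy measure on ℝ and let f : ℝ → ℝ be a continuous function with f(0) = 0 and ∫_ℝ f(x)² ν(dx) < ∞. If ∫_ℝ (e^{i z f(x)} − 1 − i z f(x)) ν(dx) = 0 for every z ∈ ℝ, then f(x) = 0 for ν-almost every x. -/
/-! Taking real parts, `∫ (1 - cos (z f)) dν = 0` with a nonnegative integrand, so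
`cos (z f x) = 1` for ν-a.e. `x`. Applied with `z = 1` and `z = √2`, this puts `f x` in
`2πℤ ∩ (2π/√2)ℤ = {0}`, by irrationality of `√2`. -/

open MeasureTheory Complex

lemma norm_exp_I_mul_ofReal_sub_one_sub_le (y : ℝ) :
    ‖exp (I * y) - 1 - I * y‖ ≤ 2 * y ^ 2 := by
  have hIy : ‖I * (y : ℂ)‖ = |y| := by simp
  rcases le_or_gt |y| 1 with hy | hy
  · calc ‖exp (I * y) - 1 - I * y‖ ≤ ‖I * (y : ℂ)‖ ^ 2 :=
          norm_exp_sub_one_sub_id_le (hIy ▸ hy)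
      _ = y ^ 2 := by rw [hIy, sq_abs]
      _ ≤ 2 * y ^ 2 := by nlinarith [sq_nonneg y]
  · calc ‖exp (I * y) - 1 - I * y‖ ≤ ‖exp (I * y) - 1‖ + ‖I * (y : ℂ)‖ := norm_sub_le _ _
      _ ≤ |y| + |y| := by
          rw [hIy]
          gcongr
          exact Real.norm_exp_I_mul_ofReal_sub_one_le
      _ ≤ 2 * y ^ 2 := by nlinarith [sq_abs y]

section

variable {α : Type*} [MeasurableSpace α] {μ : Measure α} {g : α → ℝ}

lemma integrable_exp_I_mul_sub_one_sub (hg : AEStronglyMeasurable g μ)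
    (hg2 : Integrable (fun x => g x ^ 2) μ) :
    Integrable (fun x => exp (I * g x) - 1 - I * g x) μ := by
  have hcont : Continuous fun y : ℝ => exp (I * y) - 1 - I * y := by fun_prop
  exact (hg2.const_mul 2).mono' (hcont.comp_aestronglyMeasurable hg)
    (.of_forall fun x => norm_exp_I_mul_ofReal_sub_one_sub_le (g x))

lemma ae_cos_eq_one_of_integral_exp_I_mul_sub_one_sub_eq_zero
    (hint : Integrable (fun x => exp (I * g x) - 1 - I * g x) μ)
    (h : ∫ x, (exp (I * g x) - 1 - I * g x) ∂μ = 0) :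
    ∀ᵐ x ∂μ, Real.cos (g x) = 1 := by
  have hre : ∀ x, -RCLike.re (exp (I * g x) - 1 - I * g x) = 1 - Real.cos (g x) := fun x => by
    simp [exp_re]
  have hint_re : Integrable (fun x => 1 - Real.cos (g x)) μ :=
    hint.re.neg.congr (.of_forall hre)
  have hzero : ∫ x, (1 - Real.cos (g x)) ∂μ = 0 := calc
    _ = ∫ x, -RCLike.re (exp (I * g x) - 1 - I * g x) ∂μ :=
        integral_congr_ae (.of_forall fun x => (hre x).symm)
    _ = 0 := by rw [integral_neg, integral_re hint, h, map_zero, neg_zero]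
  filter_upwards [(integral_eq_zero_iff_of_nonneg (fun x => sub_nonneg.2 (Real.cos_le_one _))
    hint_re).1 hzero] with x hx
  exact (sub_eq_zero.1 hx).symm

end

lemma eq_zero_of_cos_eq_one_of_cos_sqrt_two_mul_eq_one {y : ℝ} (h1 : Real.cos y = 1)
    (h2 : Real.cos (√2 * y) = 1) : y = 0 := by
  obtain ⟨m, rfl⟩ := (Real.cos_eq_one_iff y).1 h1
  obtain ⟨n, hn⟩ := (Real.cos_eq_one_iff _).1 h2
  have hpi : 2 * Real.pi ≠ 0 := by positivity
  suffices hm : m = 0 by simp [hm]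
  by_contra hm
  have hsqrt : √2 * m = n := by
    apply mul_right_cancel₀ hpi
    rw [hn, mul_assoc]
  exact (irrational_sqrt_two.mul_intCast hm).ne_int n hsqrt

theorem levy_exp_integral_zero_general (ν : Measure ℝ)
    (f : ℝ → ℝ) (hf : Continuous f)
    (hf2 : Integrable (fun x => f x ^ 2) ν)
    (hz : ∀ z : ℝ,
      ∫ x, (Complex.exp (Complex.I * ((z * f x : ℝ) : ℂ)) - 1 -
        Complex.I * ((z * f x : ℝ) : ℂ)) ∂ν = 0) :
    ∀ᵐ x ∂ν, f x = 0 := by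
  have hcos : ∀ z : ℝ, ∀ᵐ x ∂ν, Real.cos (z * f x) = 1 := fun z =>
    ae_cos_eq_one_of_integral_exp_I_mul_sub_one_sub_eq_zero
      (integrable_exp_I_mul_sub_one_sub (continuous_const.mul hf).aestronglyMeasurable
        (by simpa only [mul_pow] using hf2.const_mul (z ^ 2))) (hz z)
  filter_upwards [hcos 1, hcos √2] with x h1 h2
  exact eq_zero_of_cos_eq_one_of_cos_sqrt_two_mul_eq_one (by simpa using h1) h2

/-- Let `ν` be a Lévy measure on `ℝ` (i.e. `ν({0}) = 0` and `∫ min(x²,1) ν(dx) < ∞`)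
and `f : ℝ → ℝ` continuous with `f(0) = 0` and `∫ f² dν < ∞`.
If `∫ (e^{izf(x)} − 1 − izf(x)) ν(dx) = 0` for every `z ∈ ℝ`, then `f = 0` ν-a.e. -/
theorem levy_exp_integral_zero (ν : Measure ℝ) (hν0 : ν {0} = 0)
    (hν : ∫⁻ x, ENNReal.ofReal (min (x ^ 2) 1) ∂ν < ⊤)
    (f : ℝ → ℝ) (hf : Continuous f) (hf0 : f 0 = 0)
    (hf2 : Integrable (fun x => f x ^ 2) ν)
    (hz : ∀ z : ℝ,
      ∫ x, (Complex.exp (Complex.I * ((z * f x : ℝ) : ℂ)) - 1 -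
        Complex.I * ((z * f x : ℝ) : ℂ)) ∂ν = 0) :
    ∀ᵐ x ∂ν, f x = 0 :=
  levy_exp_integral_zero_general ν f hf hf2 hz
end

section
/- Let ν be a Lévy measure on ℝ with infinite support such that ∫_ℝ |x|^k ν(dx) < ∞ for every k ≥ 2, let γ(dx) = x² ν(dx), and let p_n be a monic polynomial of degree n ≥ 1 with ∫_ℝ p_n(x) x^k γ(dx) = 0 for k = 0,…,n−1 and p_n(0) ≠ 0. Then p_n has n distinct nonzero real roots a_1,…,a_n, and there exist strictly positive real numbers b_1,…,b_n such that ∫_ℝ x^k ν(dx) = Σ_{j=1}^n b_j a_j^k for every k = 2,…,2n+1. -/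
/-!
With `γ(dx) = x² ν(dx)`, all polynomials are `γ`-integrable and `γ` has infinite support, so a
nonzero nonnegative polynomial has positive `γ`-integral. Multiplying `p` by `X - a` for each
real root `a` of odd multiplicity gives such a polynomial, so by orthogonality that product has
degree `n`: the roots of `p` are real and simple. Gauss quadrature at these roots, with weights
`w_j = ∫ L_j dγ` for the Lagrange basis `L_j`, is exact in degree `< 2n` (divide by `p`, then
interpolate the remainder), hence `w_j = ∫ L_j² dγ > 0`. Finally `p(0) ≠ 0` makes the roots
nonzero and `∫ x^k dν = ∫ x^(k-2) dγ = Σ w_j a_j^(k-2)`, so `b_j = w_j / a_j²`.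
-/

open MeasureTheory Polynomial Filter

namespace Polynomial

theorem Monic.eval_pos_of_roots_eq_zero {r : ℝ[X]} (hr : r.Monic) (hroots : r.roots = 0)
    (x : ℝ) : 0 < r.eval x := by
  have hne (y : ℝ) : r.eval y ≠ 0 := fun hy => by
    simpa [hroots] using (mem_roots hr.ne_zero).mpr hy
  rcases Nat.eq_zero_or_pos r.natDegree with hd | hd
  · simp [hr.natDegree_eq_zero.mp hd]
  by_contra! hx
  have htop : Tendsto r.eval atTop atTop :=
    r.tendsto_atTop_of_leadingCoeff_nonneg (natDegree_pos_iff_degree_pos.mp hd)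
      (by simp [hr.leadingCoeff])
  obtain ⟨y, hy, hxy⟩ := ((htop.eventually_gt_atTop 0).and (eventually_ge_atTop x)).exists
  obtain ⟨c, -, hc⟩ := intermediate_value_Icc hxy r.continuous.continuousOn ⟨hx, hy.le⟩
  exact hne c hc

theorem Monic.exists_monic_natDegree_le_mul_nonneg {p : ℝ[X]} (hp : p.Monic) :
    ∃ q : ℝ[X], q.Monic ∧ q.natDegree ≤ p.roots.toFinset.card ∧
      ∀ x, 0 ≤ p.eval x * q.eval x := by
  classical
  obtain ⟨r, hpr, -, hr⟩ := p.exists_prod_multiset_X_sub_C_mul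
  have hrm : r.Monic := (monic_multisetProd_X_sub_C p.roots).of_mul_monic_left (by rwa [hpr])
  refine ⟨∏ a ∈ p.roots.toFinset with Odd (p.rootMultiplicity a), (X - C a),
    monic_prod_X_sub_C id _, ?_, fun x => ?_⟩
  · rw [natDegree_prod_of_monic _ _ fun a _ => monic_X_sub_C a]
    simpa using Finset.card_filter_le _ _
  have hfactor (a : ℝ) : 0 ≤ (x - a) ^ p.rootMultiplicity a *
      if Odd (p.rootMultiplicity a) then x - a else 1 := by
    split_ifs with hodd
    · rw [← pow_succ]; exact hodd.add_one.pow_nonneg _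
    · rw [mul_one]; exact (Nat.not_odd_iff_even.mp hodd).pow_nonneg _
  have hpx : p.eval x = (∏ a ∈ p.roots.toFinset, (x - a) ^ p.rootMultiplicity a) * r.eval x := by
    conv_lhs => rw [← hpr, prod_multiset_root_eq_finset_root]
    simp [eval_prod]
  rw [hpx, eval_prod, Finset.prod_filter, mul_right_comm, ← Finset.prod_mul_distrib]
  simp only [eval_sub, eval_X, eval_C]
  exact mul_nonneg (Finset.prod_nonneg fun a _ => hfactor a)
    (hrm.eval_pos_of_roots_eq_zero hr x).le

theorem Monic.exists_injective_eq_prod_X_sub_C {R : Type*} [CommRing R] [IsDomain R]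
    [DecidableEq R] {p : R[X]} (hp : p.Monic) (h : p.roots.toFinset.card = p.natDegree) :
    ∃ a : Fin p.natDegree → R, Function.Injective a ∧ p = ∏ j, (X - C (a j)) := by
  set s := p.roots.toFinset
  have hcard : Multiset.card p.roots = p.natDegree :=
    le_antisymm (card_roots' p) (h ▸ Multiset.toFinset_card_le _)
  have hnodup : p.roots.Nodup :=
    Multiset.toFinset_card_eq_card_iff_nodup.mp (h.trans hcard.symm)
  let e : s ≃ Fin p.natDegree := s.equivFin.trans (finCongr h)
  refine ⟨fun j => e.symm j, Subtype.val_injective.comp e.symm.injective, ?_⟩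
  calc p = ∏ x ∈ s, (X - C x) := by
        conv_lhs => rw [← prod_multiset_X_sub_C_of_monic_of_roots_card_eq hp hcard]
        rw [Finset.prod_eq_multiset_prod, Multiset.toFinset_val, hnodup.dedup]
    _ = ∏ j, (X - C (e.symm j : R)) := by
        rw [← Finset.prod_coe_sort s, ← e.symm.prod_comp]

def IsOrthogonal (μ : Measure ℝ) (p : ℝ[X]) : Prop :=
  ∀ k < p.natDegree, ∫ x, p.eval x * x ^ k ∂μ = 0

noncomputable def quadratureWeight (μ : Measure ℝ) {ι : Type*} [Fintype ι] [DecidableEq ι]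
    (a : ι → ℝ) (i : ι) : ℝ :=
  ∫ x, (Lagrange.basis .univ a i).eval x ∂μ

section Quadrature

variable {μ : Measure ℝ} (hmom : ∀ k : ℕ, Integrable (fun x : ℝ => x ^ k) μ)
include hmom

theorem integrable_eval (f : ℝ[X]) : Integrable (fun x => f.eval x) μ := by
  induction f using Polynomial.induction_on' with
  | add f g hf hg => simp only [eval_add]; exact hf.add hg
  | monomial k c => simpa [mul_comm] using (hmom k).const_mul c

theorem integral_eval_pos (hsupp : μ.support.Infinite) {f : ℝ[X]} (hf : f ≠ 0)
    (hnonneg : ∀ x, 0 ≤ f.eval x) : 0 < ∫ x, f.eval x ∂μ := by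
  rw [integral_pos_iff_support_of_nonneg hnonneg (integrable_eval hmom f)]
  obtain ⟨x, hx, hfx⟩ := (hsupp.sdiff (finite_setOfPred_isRoot hf)).nonempty
  exact (Measure.mem_support_iff_forall x).mp hx _
    ((isOpen_compl_singleton.preimage f.continuous).mem_nhds hfx)

theorem IsOrthogonal.integral_mul_eq_zero {p : ℝ[X]} (hp : IsOrthogonal μ p) {q : ℝ[X]}
    (hq : q.natDegree < p.natDegree) : ∫ x, p.eval x * q.eval x ∂μ = 0 := by
  have hint (k : ℕ) : Integrable (fun x => q.coeff k * (p.eval x * x ^ k)) μ := by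
    have h := integrable_eval hmom (C (q.coeff k) * p * X ^ k)
    simpa only [eval_mul, eval_C, eval_pow, eval_X, mul_assoc] using h
  simp_rw [eval_eq_sum_range' hq, Finset.mul_sum, mul_left_comm (p.eval _)]
  rw [integral_finsetSum _ fun k _ => hint k]
  exact Finset.sum_eq_zero fun k hk => by
    rw [integral_const_mul, hp k (Finset.mem_range.mp hk), mul_zero]

theorem IsOrthogonal.card_roots_toFinset (hsupp : μ.support.Infinite) {p : ℝ[X]}
    (hmonic : p.Monic) (hp : IsOrthogonal μ p) : p.roots.toFinset.card = p.natDegree := by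
  obtain ⟨q, hqm, hqdeg, hpq⟩ := hmonic.exists_monic_natDegree_le_mul_nonneg
  refine le_antisymm ((Multiset.toFinset_card_le _).trans (card_roots' p)) ?_
  by_contra! hlt
  have hpos := integral_eval_pos hmom hsupp (mul_ne_zero hmonic.ne_zero hqm.ne_zero)
    (by simpa only [eval_mul] using hpq)
  simp only [eval_mul] at hpos
  exact hpos.ne' (hp.integral_mul_eq_zero hmom (hqdeg.trans_lt hlt))

variable {ι : Type*} [Fintype ι] [DecidableEq ι] {a : ι → ℝ}

theorem integral_eval_eq_sum_of_degree_lt (ha : Function.Injective a) {f : ℝ[X]}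
    (hf : f.degree < Fintype.card ι) :
    ∫ x, f.eval x ∂μ = ∑ i, quadratureWeight μ a i * f.eval (a i) := by
  conv_lhs => rw [Lagrange.eq_interpolate (f := f) (s := .univ) ha.injOn (by simpa using hf),
    Lagrange.interpolate_apply]
  simp only [eval_finsetSum, eval_mul, eval_C]
  rw [integral_finsetSum _ fun i _ => (integrable_eval hmom _).const_mul _]
  exact Finset.sum_congr rfl fun i _ => by rw [integral_const_mul, mul_comm, quadratureWeight]

theorem IsOrthogonal.integral_eval_eq_sum (ha : Function.Injective a)
    (hp : IsOrthogonal μ (∏ i, (X - C (a i)))) {f : ℝ[X]}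
    (hf : f.natDegree < 2 * Fintype.card ι) :
    ∫ x, f.eval x ∂μ = ∑ i, quadratureWeight μ a i * f.eval (a i) := by
  set p := ∏ i, (X - C (a i))
  have hpm : p.Monic := monic_prod_X_sub_C a _
  have hpdeg : p.natDegree = Fintype.card ι := by
    simp [p, natDegree_prod_of_monic _ _ fun i _ => monic_X_sub_C (a i)]
  have hroot (i : ι) : p.eval (a i) = 0 := by
    simp only [p, eval_prod, eval_sub, eval_X, eval_C]
    exact Finset.prod_eq_zero (Finset.mem_univ i) (sub_self _)
  have hsplit (x : ℝ) : f.eval x = p.eval x * (f /ₘ p).eval x + (f %ₘ p).eval x := by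
    conv_lhs => rw [← modByMonic_add_div f p]
    rw [eval_add, eval_mul, add_comm]
  have hquot : ∫ x, p.eval x * (f /ₘ p).eval x ∂μ = 0 :=
    hp.integral_mul_eq_zero hmom (by rw [natDegree_divByMonic f hpm]; omega)
  have hrem : (f %ₘ p).degree < Fintype.card ι := by
    simpa [degree_eq_natDegree hpm.ne_zero, hpdeg] using degree_modByMonic_lt f hpm
  simp_rw [hsplit, hroot, zero_mul, zero_add]
  rw [integral_add (by simpa only [eval_mul] using integrable_eval hmom (p * (f /ₘ p)))
    (integrable_eval hmom _), hquot, zero_add, integral_eval_eq_sum_of_degree_lt hmom ha hrem]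

theorem IsOrthogonal.quadratureWeight_pos (hsupp : μ.support.Infinite) (ha : Function.Injective a)
    (hp : IsOrthogonal μ (∏ i, (X - C (a i)))) (i : ι) :
    0 < quadratureWeight μ a i := by
  set L := Lagrange.basis .univ a i
  have hLdeg : (L ^ 2).natDegree < 2 * Fintype.card ι := by
    rw [natDegree_pow, Lagrange.natDegree_basis ha.injOn (Finset.mem_univ i), Finset.card_univ]
    have : 0 < Fintype.card ι := Fintype.card_pos_iff.mpr ⟨i⟩
    omega
  have hsq : ∫ x, (L ^ 2).eval x ∂μ = quadratureWeight μ a i := by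
    rw [hp.integral_eval_eq_sum hmom ha hLdeg, Finset.sum_eq_single i]
    · simp [L, Lagrange.eval_basis_self ha.injOn (Finset.mem_univ i)]
    · intro j _ hji
      simp [L, Lagrange.eval_basis_of_ne hji.symm (Finset.mem_univ j)]
    · simp
  rw [← hsq]
  exact integral_eval_pos hmom hsupp
    (pow_ne_zero 2 (Lagrange.basis_ne_zero ha.injOn (Finset.mem_univ i)))
    fun x => by rw [eval_pow]; positivity

end Quadrature

end Polynomial

section Levy

variable {ν : Measure ℝ}

theorem integral_withDensity_sq (g : ℝ → ℝ) :
    ∫ x, g x ∂(ν.withDensity fun x => ENNReal.ofReal (x ^ 2)) = ∫ x, x ^ 2 * g x ∂ν := by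
  rw [integral_withDensity_eq_integral_toReal_smul (by fun_prop)
    (ae_of_all _ fun _ => ENNReal.ofReal_lt_top)]
  simp_rw [ENNReal.toReal_ofReal (sq_nonneg _), smul_eq_mul]

theorem integrable_pow_withDensity_sq
    (hmom : ∀ k : ℕ, 2 ≤ k → ∫⁻ x, ENNReal.ofReal (|x| ^ k) ∂ν < ⊤) (k : ℕ) :
    Integrable (fun x : ℝ => x ^ k) (ν.withDensity fun x => ENNReal.ofReal (x ^ 2)) := by
  rw [integrable_withDensity_iff (by fun_prop) (ae_of_all _ fun _ => ENNReal.ofReal_lt_top)]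
  refine ⟨by fun_prop, ?_⟩
  rw [hasFiniteIntegral_iff_norm]
  simpa [ENNReal.toReal_ofReal (sq_nonneg _), ← pow_add] using hmom (k + 2) (by omega)

theorem support_subset_support_withDensity_sq (hν0 : ν {0} = 0) :
    ν.support ⊆ (ν.withDensity fun x => ENNReal.ofReal (x ^ 2)).support :=
  Measure.AbsolutelyContinuous.support_mono <| withDensity_absolutelyContinuous' (by fun_prop) <|
    (measure_eq_zero_iff_ae_notMem.mp hν0).mono fun x hx => by simpa using hx

end Levy

theorem gauss_jacobi_levy_general (ν : Measure ℝ) (hν0 : ν {0} = 0)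
    (hsupp : {x : ℝ | ∀ U ∈ nhds x, ν U ≠ 0}.Infinite)
    (hmom : ∀ k : ℕ, 2 ≤ k → ∫⁻ x, ENNReal.ofReal (|x| ^ k) ∂ν < ⊤)
    (n : ℕ) (p : Polynomial ℝ) (hmonic : p.Monic)
    (hdeg : p.natDegree = n)
    (horth : ∀ k < n, ∫ x, p.eval x * x ^ k
        ∂(ν.withDensity fun x => ENNReal.ofReal (x ^ 2)) = 0)
    (h0 : p.eval 0 ≠ 0) :
    ∃ a : Fin n → ℝ, Function.Injective a ∧ (∀ j, a j ≠ 0) ∧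
      p = ∏ j, (Polynomial.X - Polynomial.C (a j)) ∧
      ∃ b : Fin n → ℝ, (∀ j, 0 < b j) ∧
        ∀ k : ℕ, 2 ≤ k → k ≤ 2 * n + 1 →
          ∫ x, x ^ k ∂ν = ∑ j, b j * a j ^ k := by
  subst hdeg
  set γ := ν.withDensity fun x => ENNReal.ofReal (x ^ 2)
  have hγmom : ∀ k : ℕ, Integrable (fun x : ℝ => x ^ k) γ := integrable_pow_withDensity_sq hmom
  have hγsupp : γ.support.Infinite := by
    refine Set.Infinite.mono (support_subset_support_withDensity_sq hν0) ?_
    convert hsupp using 1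
    ext x
    simp [Measure.mem_support_iff_forall, pos_iff_ne_zero]
  have hp : IsOrthogonal γ p := horth
  obtain ⟨a, ha, hpa⟩ := hmonic.exists_injective_eq_prod_X_sub_C
    (hp.card_roots_toFinset hγmom hγsupp hmonic)
  have ha0 (j : Fin p.natDegree) : a j ≠ 0 := fun h => h0 <| by
    rw [hpa, eval_prod]
    exact Finset.prod_eq_zero (Finset.mem_univ j) (by simp [h])
  rw [hpa] at hp
  refine ⟨a, ha, ha0, hpa, fun j => quadratureWeight γ a j / a j ^ 2, fun j =>
    div_pos (hp.quadratureWeight_pos hγmom hγsupp ha j) (pow_two_pos_of_ne_zero (ha0 j)),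
    fun k hk2 hk => ?_⟩
  obtain ⟨m, rfl⟩ : ∃ m, k = m + 2 := ⟨k - 2, by omega⟩
  calc ∫ x, x ^ (m + 2) ∂ν = ∫ x, (X ^ m : ℝ[X]).eval x ∂γ := by
        rw [integral_withDensity_sq]; simp [pow_add, mul_comm]
    _ = ∑ j, quadratureWeight γ a j * a j ^ m := by
        rw [hp.integral_eval_eq_sum hγmom ha (by simp; omega)]; simp
    _ = _ := Finset.sum_congr rfl fun j _ => by field_simp [ha0 j]; ring

/-- Gauss–Jacobi mechanical quadrature for a Lévy measure: if `ν` is a Lévy measure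
on `ℝ` with infinite (topological) support and finite moments of all orders `≥ 2`,
`γ(dx) = x² ν(dx)`, and `p` is a monic polynomial of degree `n ≥ 1` orthogonal to
`1, x, …, x^{n−1}` in `L²(γ)` with `p(0) ≠ 0`, then `p` has `n` distinct nonzero real
roots `a₁,…,aₙ` and there are `b₁,…,bₙ > 0` with
`∫ x^k ν(dx) = Σ_j b_j a_j^k` for `k = 2,…,2n+1`. -/
theorem gauss_jacobi_levy (ν : Measure ℝ) (hν0 : ν {0} = 0)
    (hνloc : ∫⁻ x, ENNReal.ofReal (min (x ^ 2) 1) ∂ν < ⊤)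
    (hsupp : {x : ℝ | ∀ U ∈ nhds x, ν U ≠ 0}.Infinite)
    (hmom : ∀ k : ℕ, 2 ≤ k → ∫⁻ x, ENNReal.ofReal (|x| ^ k) ∂ν < ⊤)
    (n : ℕ) (hn : 1 ≤ n) (p : Polynomial ℝ) (hmonic : p.Monic)
    (hdeg : p.natDegree = n)
    (horth : ∀ k < n, ∫ x, p.eval x * x ^ k
        ∂(ν.withDensity fun x => ENNReal.ofReal (x ^ 2)) = 0)
    (h0 : p.eval 0 ≠ 0) :
    ∃ a : Fin n → ℝ, Function.Injective a ∧ (∀ j, a j ≠ 0) ∧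
      p = ∏ j, (Polynomial.X - Polynomial.C (a j)) ∧
      ∃ b : Fin n → ℝ, (∀ j, 0 < b j) ∧
        ∀ k : ℕ, 2 ≤ k → k ≤ 2 * n + 1 →
          ∫ x, x ^ k ∂ν = ∑ j, b j * a j ^ k :=
  gauss_jacobi_levy_general ν hν0 hsupp hmom n p hmonic hdeg horth h0
end

section
/- Let σ > 0 and let ν be a Lévy measure on ℝ with infinite support and ∫ |x|^k ν(dx) < ∞ for all k ≥ 2; set γ(dx) = x² ν(dx) and γ^σ(dx) = σ² δ_0(dx) + x² ν(dx). For each k, let p_k be the monic k-th orthogonal polynomial with respect to γ and p_k^σ the monic k-th orthogonal polynomial with respect to γ^σ. If p_n(0) ≠ 0, then there exist real numbers λ_n and λ_{n−1} such that p_{n+1}^σ(x) = x p_n(x) − λ_n p_n^σ(x) − λ_{n−1} p_{n−1}^σ(x). -/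
/-!
`X * p - q1` has degree at most `n` (both are monic of degree `n + 1`) and is orthogonal for
`γ^σ` to every polynomial of degree `< n - 1`: the atom at `0` does not see `X * p`, and
`∫ x p(x) xᵏ dγ = ∫ p(x) xᵏ⁺¹ dγ = 0` for `k + 1 < n`. Because `ν` has infinite support, a
polynomial vanishing `γ^σ`-a.e. is zero, so the moment form of `γ^σ` is positive definite and a
polynomial of degree `< n - 1` orthogonal to all lower powers vanishes. Subtracting the right
multiples of the monic `q2` and `q3` from `X * p - q1` leaves such a polynomial.
-/

open MeasureTheory Polynomial
open scoped ENNReal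

namespace Polynomial

variable {R : Type*} [Ring R]

theorem degree_sub_C_coeff_mul_lt {r q : R[X]} {m : ℕ} (hr : r.degree < ↑(m + 1))
    (hq : IsMonicOfDegree q m) : (r - C (r.coeff m) * q).degree < m := by
  rw [degree_lt_iff_coeff_zero] at hr ⊢
  intro k hk
  rw [coeff_sub, coeff_C_mul]
  rcases hk.eq_or_lt with rfl | hlt
  · rw [← hq.natDegree_eq, hq.monic.coeff_natDegree, mul_one, sub_self]
  · rw [hr k hlt, coeff_eq_zero_of_natDegree_lt (p := q) (hq.natDegree_eq ▸ hlt), mul_zero,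
      sub_zero]

theorem eq_zero_of_ae_eval_eq_zero {ν : Measure ℝ} (hν : ν.support.Infinite) {f : ℝ[X]}
    (hf : ∀ᵐ x ∂ν, f.eval x = 0) : f = 0 := by
  by_contra hf0
  obtain ⟨y, hy, hfy⟩ := (hν.sdiff (f.finite_setOfPred_isRoot hf0)).nonempty
  have hU : {x | f.eval x ≠ 0} ∈ nhds y := (isOpen_ne.preimage f.continuous).mem_nhds hfy
  exact ((Measure.mem_support_iff_forall y).1 hy _ hU).ne' (ae_iff.1 hf)

end Polynomial

def HasFiniteMoments (μ : Measure ℝ) : Prop :=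
  ∀ k : ℕ, Integrable (fun x => x ^ k) μ

namespace HasFiniteMoments

variable {μ ν : Measure ℝ}

theorem integrable_eval (hμ : HasFiniteMoments μ) (f : ℝ[X]) :
    Integrable (fun x => f.eval x) μ := by
  simp_rw [eval_eq_sum_range]
  exact integrable_finsetSum _ fun i _ => (hμ i).const_mul _

theorem integrable_eval_mul_pow (hμ : HasFiniteMoments μ) (f : ℝ[X]) (k : ℕ) :
    Integrable (fun x => f.eval x * x ^ k) μ :=
  (hμ.integrable_eval (f * X ^ k)).congr (.of_forall fun _ => eval_mul_X_pow)

theorem add (hμ : HasFiniteMoments μ) (hν : HasFiniteMoments ν) :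
    HasFiniteMoments (μ + ν) :=
  fun k => (hμ k).add_measure (hν k)

theorem smul (hμ : HasFiniteMoments μ) {c : ℝ≥0∞} (hc : c ≠ ∞) :
    HasFiniteMoments (c • μ) :=
  fun k => (hμ k).smul_measure hc

end HasFiniteMoments

theorem hasFiniteMoments_dirac (a : ℝ) : HasFiniteMoments (Measure.dirac a) :=
  fun _ => integrable_dirac enorm_lt_top

theorem hasFiniteMoments_withDensity_sq {ν : Measure ℝ}
    (hν : ∀ k : ℕ, 2 ≤ k → ∫⁻ x, ENNReal.ofReal (|x| ^ k) ∂ν < ∞) :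
    HasFiniteMoments (ν.withDensity fun x => ENNReal.ofReal (x ^ 2)) := by
  intro k
  refine ⟨(continuous_pow k).aestronglyMeasurable, ?_⟩
  rw [HasFiniteIntegral, lintegral_withDensity_eq_lintegral_mul _ (by fun_prop) (by fun_prop)]
  have h : ∀ x : ℝ, ENNReal.ofReal (x ^ 2) * ‖x ^ k‖ₑ = ENNReal.ofReal (|x| ^ (k + 2)) := by
    intro x
    rw [← ofReal_norm, ← ENNReal.ofReal_mul (sq_nonneg x), norm_pow, Real.norm_eq_abs,
      ← sq_abs, pow_add, mul_comm]
  simpa only [Pi.mul_apply, h] using hν (k + 2) (by omega)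

namespace Polynomial

theorem eq_zero_of_ae_withDensity_sq_eval_eq_zero {ν : Measure ℝ} (hν : ν.support.Infinite)
    {f : ℝ[X]} (hf : ∀ᵐ x ∂ν.withDensity (fun x => ENNReal.ofReal (x ^ 2)), f.eval x = 0) :
    f = 0 := by
  have hX2f : ∀ᵐ x ∂ν, (X ^ 2 * f).eval x = 0 := by
    filter_upwards [(ae_withDensity_iff (by fun_prop)).1 hf] with x hx
    rcases eq_or_ne (ENNReal.ofReal (x ^ 2)) 0 with h | h
    · simp [le_antisymm (ENNReal.ofReal_eq_zero.1 h) (sq_nonneg x)]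
    · simp [hx h]
  exact (mul_eq_zero.1 (eq_zero_of_ae_eval_eq_zero hν hX2f)).resolve_left
    (pow_ne_zero 2 X_ne_zero)

def OrthogonalToDegreeLT (μ : Measure ℝ) (m : ℕ) (f : ℝ[X]) : Prop :=
  ∀ k < m, ∫ x, f.eval x * x ^ k ∂μ = 0

namespace OrthogonalToDegreeLT

variable {μ : Measure ℝ} {m : ℕ} {f g : ℝ[X]}

theorem mono (hf : OrthogonalToDegreeLT μ m f) {m' : ℕ} (h : m' ≤ m) :
    OrthogonalToDegreeLT μ m' f :=
  fun k hk => hf k (hk.trans_le h)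

theorem C_mul (hf : OrthogonalToDegreeLT μ m f) (a : ℝ) : OrthogonalToDegreeLT μ m (C a * f) :=
  fun k hk => by simp only [eval_mul, eval_C, mul_assoc, integral_const_mul, hf k hk, mul_zero]

theorem sub (hμ : HasFiniteMoments μ) (hf : OrthogonalToDegreeLT μ m f)
    (hg : OrthogonalToDegreeLT μ m g) : OrthogonalToDegreeLT μ m (f - g) := fun k hk => by
  simp only [eval_sub, sub_mul]
  rw [integral_sub (hμ.integrable_eval_mul_pow f k) (hμ.integrable_eval_mul_pow g k), hf k hk,
    hg k hk, sub_zero]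

theorem X_mul_smul_dirac_zero_add (hμ : HasFiniteMoments μ) {c : ℝ≥0∞} (hc : c ≠ ∞)
    (hf : OrthogonalToDegreeLT μ m f) :
    OrthogonalToDegreeLT (c • Measure.dirac 0 + μ) (m - 1) (X * f) := fun k hk => by
  rw [integral_add_measure (((hasFiniteMoments_dirac 0).smul hc).integrable_eval_mul_pow _ k)
    (hμ.integrable_eval_mul_pow _ k), integral_smul_measure, integral_dirac]
  simp only [eval_mul, eval_X, zero_mul, smul_zero, zero_add]
  rw [← hf (k + 1) (by omega)]
  congr with x
  ring

theorem eq_zero_of_degree_lt (hμ : HasFiniteMoments μ)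
    (hsep : ∀ g : ℝ[X], (∀ᵐ x ∂μ, g.eval x = 0) → g = 0)
    (hf : OrthogonalToDegreeLT μ m f) (hdeg : f.degree < m) : f = 0 := by
  by_contra hf0
  have hdeg' : f.natDegree < m := (natDegree_lt_iff_degree_lt hf0).2 hdeg
  have hsq : ∫ x, f.eval x * f.eval x ∂μ = 0 := by
    have hexpand : ∀ x,
        f.eval x * f.eval x = ∑ k ∈ Finset.range m, f.coeff k * (f.eval x * x ^ k) := by
      intro x
      nth_rw 2 [eval_eq_sum_range' hdeg']
      rw [Finset.mul_sum]
      exact Finset.sum_congr rfl fun k _ => by ring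
    simp_rw [hexpand]
    rw [integral_finsetSum _ fun k _ => (hμ.integrable_eval_mul_pow f k).const_mul _]
    exact Finset.sum_eq_zero fun k hk => by
      rw [integral_const_mul, hf k (Finset.mem_range.1 hk), mul_zero]
  have hae : ∀ᵐ x ∂μ, f.eval x * f.eval x = 0 :=
    (integral_eq_zero_iff_of_nonneg (fun x => mul_self_nonneg _)
      (by simpa using hμ.integrable_eval (f * f))).1 hsq
  exact hf0 (hsep f (hae.mono fun x hx => mul_self_eq_zero.1 hx))

end OrthogonalToDegreeLT

theorem eq_C_mul_add_C_mul_of_orthogonalToDegreeLT {μ : Measure ℝ} (hμ : HasFiniteMoments μ)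
    (hsep : ∀ g : ℝ[X], (∀ᵐ x ∂μ, g.eval x = 0) → g = 0) {n : ℕ} {r q₂ q₃ : ℝ[X]}
    (hr : r.degree < ↑(n + 1)) (hr' : OrthogonalToDegreeLT μ (n - 1) r)
    (hq₂ : IsMonicOfDegree q₂ n) (hq₂' : OrthogonalToDegreeLT μ (n - 1) q₂)
    (hq₃ : IsMonicOfDegree q₃ (n - 1)) (hq₃' : OrthogonalToDegreeLT μ (n - 1) q₃) :
    ∃ a b : ℝ, r = C a * q₂ + C b * q₃ := by
  obtain ⟨s, hs⟩ : ∃ s, s = r - C (r.coeff n) * q₂ := ⟨_, rfl⟩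
  have hsdeg : s.degree < ↑(n - 1 + 1) := hs ▸ (degree_sub_C_coeff_mul_lt hr hq₂).trans_le
    (by exact_mod_cast (by omega : n ≤ n - 1 + 1))
  have hsorth : OrthogonalToDegreeLT μ (n - 1) s := hs ▸ hr'.sub hμ (hq₂'.C_mul _)
  have h : s - C (s.coeff (n - 1)) * q₃ = 0 :=
    (hsorth.sub hμ (hq₃'.C_mul _)).eq_zero_of_degree_lt hμ hsep
      (degree_sub_C_coeff_mul_lt hsdeg hq₃)
  exact ⟨r.coeff n, s.coeff (n - 1), by linear_combination h - hs⟩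

end Polynomial

theorem teugels_recurrence_general (σ : ℝ) (ν : Measure ℝ)
    (hsupp : {x : ℝ | ∀ U ∈ nhds x, ν U ≠ 0}.Infinite)
    (hmom : ∀ k : ℕ, 2 ≤ k → ∫⁻ x, ENNReal.ofReal (|x| ^ k) ∂ν < ⊤)
    (n : ℕ)
    (p : Polynomial ℝ) (hp : p.Monic) (hpd : p.natDegree = n)
    (hporth : ∀ k < n, ∫ x, p.eval x * x ^ k
        ∂(ν.withDensity fun x => ENNReal.ofReal (x ^ 2)) = 0)
    (q1 q2 q3 : Polynomial ℝ)
    (hq1 : q1.Monic) (hq1d : q1.natDegree = n + 1)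
    (hq1orth : ∀ k < n + 1, ∫ x, q1.eval x * x ^ k
        ∂(ENNReal.ofReal (σ ^ 2) • Measure.dirac (0 : ℝ) +
          ν.withDensity fun x => ENNReal.ofReal (x ^ 2)) = 0)
    (hq2 : q2.Monic) (hq2d : q2.natDegree = n)
    (hq2orth : ∀ k < n, ∫ x, q2.eval x * x ^ k
        ∂(ENNReal.ofReal (σ ^ 2) • Measure.dirac (0 : ℝ) +
          ν.withDensity fun x => ENNReal.ofReal (x ^ 2)) = 0)
    (hq3 : q3.Monic) (hq3d : q3.natDegree = n - 1)
    (hq3orth : ∀ k < n - 1, ∫ x, q3.eval x * x ^ k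
        ∂(ENNReal.ofReal (σ ^ 2) • Measure.dirac (0 : ℝ) +
          ν.withDensity fun x => ENNReal.ofReal (x ^ 2)) = 0) :
    ∃ l1 l2 : ℝ,
      q1 = Polynomial.X * p - Polynomial.C l1 * q2 - Polynomial.C l2 * q3 := by
  have hsupp' : ν.support.Infinite := by
    convert hsupp using 1
    ext x
    simp [Measure.mem_support_iff_forall, pos_iff_ne_zero]
  have hγ := hasFiniteMoments_withDensity_sq hmom
  have hγσ := ((hasFiniteMoments_dirac 0).smul (ENNReal.ofReal_ne_top (r := σ ^ 2))).add hγ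
  have hsep : ∀ f : ℝ[X], (∀ᵐ x ∂(ENNReal.ofReal (σ ^ 2) • Measure.dirac (0 : ℝ) +
      ν.withDensity fun x => ENNReal.ofReal (x ^ 2)), f.eval x = 0) → f = 0 :=
    fun f hf => eq_zero_of_ae_withDensity_sq_eval_eq_zero hsupp' (ae_add_measure_iff.1 hf).2
  have hXp : IsMonicOfDegree (X * p) (n + 1) :=
    add_comm 1 n ▸ (isMonicOfDegree_X ℝ).mul ⟨hpd, hp⟩
  have hr : (X * p - q1).degree < ↑(n + 1) := degree_le_natDegree.trans_lt
    (by exact_mod_cast hXp.natDegree_sub_lt n.succ_ne_zero ⟨hq1d, hq1⟩)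
  have hrorth : OrthogonalToDegreeLT _ (n - 1) (X * p - q1) :=
    (OrthogonalToDegreeLT.X_mul_smul_dirac_zero_add hγ ENNReal.ofReal_ne_top hporth).sub hγσ
      (OrthogonalToDegreeLT.mono hq1orth (by omega))
  obtain ⟨a, b, h⟩ := eq_C_mul_add_C_mul_of_orthogonalToDegreeLT hγσ hsep hr hrorth
    ⟨hq2d, hq2⟩ (OrthogonalToDegreeLT.mono hq2orth (Nat.sub_le n 1)) ⟨hq3d, hq3⟩ hq3orth
  exact ⟨a, b, by linear_combination -h⟩

/-- Let `σ > 0` and `ν` be a Lévy measure with infinite support and finite moments of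
all orders `≥ 2`; set `γ(dx) = x² ν(dx)` and `γ^σ = σ²δ₀ + γ`. If `p` is the monic
`n`-th orthogonal polynomial for `γ`, `q₁, q₂, q₃` are the monic orthogonal
polynomials of degrees `n+1, n, n−1` for `γ^σ`, and `p(0) ≠ 0`, then there exist
`λₙ, λₙ₋₁ ∈ ℝ` with `q₁(x) = x p(x) − λₙ q₂(x) − λₙ₋₁ q₃(x)`. -/
theorem teugels_recurrence (σ : ℝ) (hσ : 0 < σ) (ν : Measure ℝ) (hν0 : ν {0} = 0)
    (hsupp : {x : ℝ | ∀ U ∈ nhds x, ν U ≠ 0}.Infinite)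
    (hmom : ∀ k : ℕ, 2 ≤ k → ∫⁻ x, ENNReal.ofReal (|x| ^ k) ∂ν < ⊤)
    (n : ℕ) (hn : 1 ≤ n)
    (p : Polynomial ℝ) (hp : p.Monic) (hpd : p.natDegree = n)
    (hporth : ∀ k < n, ∫ x, p.eval x * x ^ k
        ∂(ν.withDensity fun x => ENNReal.ofReal (x ^ 2)) = 0)
    (h0 : p.eval 0 ≠ 0)
    (q1 q2 q3 : Polynomial ℝ)
    (hq1 : q1.Monic) (hq1d : q1.natDegree = n + 1)
    (hq1orth : ∀ k < n + 1, ∫ x, q1.eval x * x ^ k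
        ∂(ENNReal.ofReal (σ ^ 2) • Measure.dirac (0 : ℝ) +
          ν.withDensity fun x => ENNReal.ofReal (x ^ 2)) = 0)
    (hq2 : q2.Monic) (hq2d : q2.natDegree = n)
    (hq2orth : ∀ k < n, ∫ x, q2.eval x * x ^ k
        ∂(ENNReal.ofReal (σ ^ 2) • Measure.dirac (0 : ℝ) +
          ν.withDensity fun x => ENNReal.ofReal (x ^ 2)) = 0)
    (hq3 : q3.Monic) (hq3d : q3.natDegree = n - 1)
    (hq3orth : ∀ k < n - 1, ∫ x, q3.eval x * x ^ k
        ∂(ENNReal.ofReal (σ ^ 2) • Measure.dirac (0 : ℝ) +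
          ν.withDensity fun x => ENNReal.ofReal (x ^ 2)) = 0) :
    ∃ l1 l2 : ℝ,
      q1 = Polynomial.X * p - Polynomial.C l1 * q2 - Polynomial.C l2 * q3 :=
  teugels_recurrence_general σ ν hsupp hmom n p hp hpd hporth q1 q2 q3 hq1 hq1d hq1orth hq2 hq2d
    hq2orth hq3 hq3d hq3orth
end
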